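/- In the extended graph G' of a finite bipartite weighted graph with parts A, B, initial vertex s ∈ A and marked vertex t ∈ B, let p = (p_e)_{e∈E} be a unit flow from s to t, and let v₁ = Σ_{e∈E} (p_e/√(w_e)) |e⟩. Then the vector −|ss'⟩ + v₁ − |t't⟩ is orthogonal to ψ_u for every u ∈ A ∪ B; consequently it is fixed by both R_A and R_B, and hence by U = R_B R_A. -/

import Mathlib

/-!
Pairing a star state `ψ_u` with the flow state `−|ss'⟩ + v₁ − |t't⟩` gives the net flow of `p`
at `u` minus `1` when `u` carries a dangling edge (`u = s` or `u = t`): the amplitude `√(w e)` of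
`ψ_u` cancels the `1 / √(w e)` of `v₁`. Flow conservation makes all these pairings vanish, and
`R_A`, `R_B` fix every vector orthogonal to their star states.

The dangling edges are `Sum.inr false = ss'` and `Sum.inr true = t't`.
-/

noncomputable section

namespace Stmt5

variable {V E : Type*} [Fintype V] [Fintype E] [DecidableEq V] [DecidableEq E]

def ket (x : E ⊕ Bool) : EuclideanSpace ℂ (E ⊕ Bool) := EuclideanSpace.single x 1

def psiA (endA : E → V) (w : E → ℝ) (s : V) (u : V) : EuclideanSpace ℂ (E ⊕ Bool) :=
  (∑ e ∈ Finset.univ.filter (fun e => endA e = u),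
      ((Real.sqrt (w e) : ℂ) • ket (Sum.inl e))) +
    (if u = s then ket (Sum.inr false) else 0)

def psiB (endB : E → V) (w : E → ℝ) (t : V) (u : V) : EuclideanSpace ℂ (E ⊕ Bool) :=
  (∑ e ∈ Finset.univ.filter (fun e => endB e = u),
      ((Real.sqrt (w e) : ℂ) • ket (Sum.inl e))) +
    (if u = t then ket (Sum.inr true) else 0)

def v₁ (w : E → ℝ) (p : E → ℝ) : EuclideanSpace ℂ (E ⊕ Bool) :=
  ∑ e : E, (((p e / Real.sqrt (w e) : ℝ) : ℂ) • ket (Sum.inl e))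

def flowState (w p : E → ℝ) : EuclideanSpace ℂ (E ⊕ Bool) :=
  -ket (Sum.inr false) + v₁ w p - ket (Sum.inr true)

lemma inner_ket_left (x : E ⊕ Bool) (v : EuclideanSpace ℂ (E ⊕ Bool)) :
    inner ℂ (ket x) v = v x := by
  simp [ket, EuclideanSpace.inner_single_left]

lemma flowState_inl (w p : E → ℝ) (e : E) :
    flowState w p (Sum.inl e) = ((p e / Real.sqrt (w e) : ℝ) : ℂ) := by
  simp [flowState, v₁, ket, Pi.single_apply]

lemma flowState_inr (w p : E → ℝ) (b : Bool) : flowState w p (Sum.inr b) = -1 := by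
  cases b <;> simp [flowState, v₁, ket]

lemma inner_sum_sqrt_smul_ket_flowState {w : E → ℝ} (hw : ∀ e, 0 < w e) (p : E → ℝ)
    (S : Finset E) :
    inner ℂ (∑ e ∈ S, (Real.sqrt (w e) : ℂ) • ket (Sum.inl e)) (flowState w p)
      = ((∑ e ∈ S, p e : ℝ) : ℂ) := by
  rw [sum_inner, Complex.ofReal_sum]
  refine Finset.sum_congr rfl fun e _ => ?_
  have hsqrt : (Real.sqrt (w e) : ℂ) ≠ 0 := by exact_mod_cast (Real.sqrt_pos.2 (hw e)).ne'
  rw [inner_smul_left, inner_ket_left, flowState_inl, Complex.conj_ofReal]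
  push_cast
  field_simp

lemma inner_ket_inr_flowState (w p : E → ℝ) (b : Bool) :
    inner ℂ (ket (Sum.inr b)) (flowState w p) = -1 := by
  rw [inner_ket_left, flowState_inr]

lemma inner_starState_flowState {w : E → ℝ} (hw : ∀ e, 0 < w e) (p : E → ℝ) (S : Finset E)
    (c : Prop) [Decidable c] (b : Bool) :
    inner ℂ ((∑ e ∈ S, (Real.sqrt (w e) : ℂ) • ket (Sum.inl e))
        + if c then ket (Sum.inr b) else 0) (flowState w p)
      = ((∑ e ∈ S, p e : ℝ) : ℂ) - if c then 1 else 0 := by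
  rw [inner_add_left, inner_sum_sqrt_smul_ket_flowState hw]
  split_ifs
  · rw [inner_ket_inr_flowState, sub_eq_add_neg]
  · rw [inner_zero_left, sub_zero, add_zero]

theorem flow_state_fixed
    (A B : Finset V)
    (endA endB : E → V)
    (w : E → ℝ) (hw : ∀ e, 0 < w e)
    (s t : V)
    (p : E → ℝ)
    (hpA : ∀ u ∈ A, ∑ e ∈ Finset.univ.filter (fun e => endA e = u), p e
        = if u = s then 1 else 0)
    (hpB : ∀ u ∈ B, ∑ e ∈ Finset.univ.filter (fun e => endB e = u), p e
        = if u = t then 1 else 0)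
    (RA RB : EuclideanSpace ℂ (E ⊕ Bool) →ₗ[ℂ] EuclideanSpace ℂ (E ⊕ Bool))
    (hRAid : ∀ x, (∀ u ∈ A, (inner ℂ (psiA endA w s u) x : ℂ) = 0) → RA x = x)
    (hRBid : ∀ x, (∀ u ∈ B, (inner ℂ (psiB endB w t u) x : ℂ) = 0) → RB x = x) :
    (∀ u ∈ A, (inner ℂ (psiA endA w s u)
        (-ket (Sum.inr false) + v₁ w p - ket (Sum.inr true)) : ℂ) = 0) ∧
    (∀ u ∈ B, (inner ℂ (psiB endB w t u)
        (-ket (Sum.inr false) + v₁ w p - ket (Sum.inr true)) : ℂ) = 0) ∧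
    RA (-ket (Sum.inr false) + v₁ w p - ket (Sum.inr true))
        = -ket (Sum.inr false) + v₁ w p - ket (Sum.inr true) ∧
    RB (-ket (Sum.inr false) + v₁ w p - ket (Sum.inr true))
        = -ket (Sum.inr false) + v₁ w p - ket (Sum.inr true) ∧
    RB (RA (-ket (Sum.inr false) + v₁ w p - ket (Sum.inr true)))
        = -ket (Sum.inr false) + v₁ w p - ket (Sum.inr true) := by
  rw [show -ket (Sum.inr false) + v₁ w p - ket (Sum.inr true) = flowState w p from rfl]
  have orthA : ∀ u ∈ A, inner ℂ (psiA endA w s u) (flowState w p) = 0 := fun u hu => by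
    rw [psiA, inner_starState_flowState hw, hpA u hu]
    split_ifs <;> simp
  have orthB : ∀ u ∈ B, inner ℂ (psiB endB w t u) (flowState w p) = 0 := fun u hu => by
    rw [psiB, inner_starState_flowState hw, hpB u hu]
    split_ifs <;> simp
  have fixA := hRAid _ orthA
  have fixB := hRBid _ orthB
  exact ⟨orthA, orthB, fixA, fixB, by rw [fixA, fixB]⟩

end Stmt5
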